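/- arXiv:1906.08441 — 2 statements merged into one kernel-verified Lean document; each statement's English description precedes it below -/
import Mathlib

section
/- Let A and B be irreducible non-permutation square matrices with entries in {0,1}. The two-sided topological Markov shifts (X̄_A, σ̄_A) and (X̄_B, σ̄_B) are flip conjugate if and only if they are asymptotically flip conjugate. -/
open Filter Set Topology

noncomputable section

/-- Integer iterate of a homeomorphism. -/
def hIter {X : Type*} [TopologicalSpace X] (φ : X ≃ₜ X) (n : ℤ) (x : X) : X :=
  ((φ.toEquiv : Equiv.Perm X) ^ n) x

/-- The cocycle sums `f^n` of a function `f : X → ℤ` along the iterates of `φ`: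
`f^n(x) = Σ_{i=0}^{n-1} f(φ^i(x))` for `n > 0`, `f^0 = 0`, and
`f^n(x) = −Σ_{i=n}^{-1} f(φ^i(x))` for `n < 0`. -/
def cSum {X : Type*} [TopologicalSpace X] (φ : X ≃ₜ X) (f : X → ℤ) (n : ℤ) (x : X) : ℤ :=
  if 0 ≤ n then ∑ i ∈ Finset.range n.toNat, f (hIter φ i x)
  else -∑ i ∈ Finset.range (-n).toNat, f (hIter φ (n + i) x)

/-- Stable asymptotic pairs (limit definition). -/
def asympS {X : Type*} [MetricSpace X] (φ : X ≃ₜ X) : Set (X × X) :=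
  {p | Tendsto (fun n : ℕ => dist (hIter φ n p.1) (hIter φ n p.2)) atTop (nhds 0)}

/-- Unstable asymptotic pairs (limit definition). -/
def asympU {X : Type*} [MetricSpace X] (φ : X ≃ₜ X) : Set (X × X) :=
  {p | Tendsto (fun n : ℕ => dist (hIter φ (-(n : ℤ)) p.1) (hIter φ (-(n : ℤ)) p.2))
    atTop (nhds 0)}

/-- Asymptotic pairs (limit definition). -/
def asympA {X : Type*} [MetricSpace X] (φ : X ≃ₜ X) : Set (X × X) := asympS φ ∩ asympU φ

/-- The `ω`-limit set of `x`. -/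
def omegaSet {X : Type*} [MetricSpace X] (φ : X ≃ₜ X) (x : X) : Set X :=
  {z | ∃ n : ℕ → ℕ, StrictMono n ∧ Tendsto (fun i => hIter φ (n i) x) atTop (nhds z)}

/-- The `α`-limit set of `x`. -/
def alphaSet {X : Type*} [MetricSpace X] (φ : X ≃ₜ X) (x : X) : Set X :=
  {z | ∃ n : ℕ → ℤ, StrictAnti n ∧ Tendsto (fun i => hIter φ (n i) x) atTop (nhds z)}

/-- A Smale space structure on a compact metric space `X`. -/
structure SmaleSpace (X : Type*) [MetricSpace X] [CompactSpace X] where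
  phi : X ≃ₜ X
  eps : ℝ
  lam : ℝ
  br : X → X → X
  eps_pos : 0 < eps
  lam_pos : 0 < lam
  lam_lt_one : lam < 1
  br_cont : ContinuousOn (fun p : X × X => br p.1 p.2) {p : X × X | dist p.1 p.2 < eps}
  br_self : ∀ x : X, br x x = x
  br_assoc_left : ∀ x y z : X, dist x y < eps → dist (br x y) z < eps → dist x z < eps →
    br (br x y) z = br x z
  br_assoc_right : ∀ x y z : X, dist y z < eps → dist x (br y z) < eps → dist x z < eps →
    br x (br y z) = br x z
  phi_br : ∀ x y : X, dist x y < eps → dist (phi x) (phi y) < eps →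
    phi (br x y) = br (phi x) (phi y)
  contract_s : ∀ x y z : X, br y x = y → dist x y < eps → br z x = z → dist x z < eps →
    dist (phi y) (phi z) ≤ lam * dist y z
  contract_u : ∀ x y z : X, br x y = y → dist x y < eps → br x z = z → dist x z < eps →
    dist (phi.symm y) (phi.symm z) ≤ lam * dist y z

namespace SmaleSpace

variable {X Y : Type*} [MetricSpace X] [CompactSpace X] [MetricSpace Y] [CompactSpace Y]

/-- Local stable set `X^s(x,ε)`. -/
def Xs (S : SmaleSpace X) (x : X) (ε : ℝ) : Set X := {y | S.br y x = y ∧ dist x y < ε}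

/-- Local unstable set `X^u(x,ε)`. -/
def Xu (S : SmaleSpace X) (x : X) (ε : ℝ) : Set X := {y | S.br x y = y ∧ dist x y < ε}

def Gs0 (S : SmaleSpace X) : Set (X × X) := {p | p.2 ∈ S.Xs p.1 S.eps}

def Gu0 (S : SmaleSpace X) : Set (X × X) := {p | p.2 ∈ S.Xu p.1 S.eps}

/-- `G_φ^{s,n} = (φ×φ)^{-n}(G_φ^{s,0})`. -/
def GsN (S : SmaleSpace X) (n : ℤ) : Set (X × X) :=
  {p | (hIter S.phi n p.1, hIter S.phi n p.2) ∈ S.Gs0}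

/-- `G_φ^{u,n} = (φ×φ)^{n}(G_φ^{u,0})`. -/
def GuN (S : SmaleSpace X) (n : ℤ) : Set (X × X) :=
  {p | (hIter S.phi (-n) p.1, hIter S.phi (-n) p.2) ∈ S.Gu0}

def GaN (S : SmaleSpace X) (n : ℤ) : Set (X × X) := S.GsN n ∩ S.GuN n

/-- The asymptotic equivalence relation `G_φ^a = ⋃_{n ≥ 0} G_φ^{a,n}`. -/
def Ga (S : SmaleSpace X) : Set (X × X) := ⋃ n : ℕ, S.GaN n

lemma gaN_subset_ga (S : SmaleSpace X) (n : ℕ) : S.GaN n ⊆ S.Ga :=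
  Set.subset_iUnion (fun k : ℕ => S.GaN k) n

/-- The inductive limit topology on `G_φ^a`: a set is open iff its intersection with each
`G_φ^{a,n}` is open in the subspace topology from `X × X`. -/
def gaTopology (S : SmaleSpace X) : TopologicalSpace ↥S.Ga :=
  ⨆ n : ℕ, TopologicalSpace.coinduced (Set.inclusion (S.gaN_subset_ga n)) inferInstance

/-- Irreducibility of a Smale space. -/
def Irreducible (S : SmaleSpace X) : Prop :=
  ∀ U V : Set X, IsOpen U → U.Nonempty → IsOpen V → V.Nonempty →
    ∃ K : ℕ, ((hIter S.phi K '' U) ∩ V).Nonempty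

def IsPeriodicPoint (S : SmaleSpace X) (x : X) : Prop :=
  ∃ p : ℕ, 0 < p ∧ hIter S.phi p x = x

/-- `h` is a flip conjugacy between `(X,φ)` and `(Y,ψ)`. -/
def IsFlipConjugacy (S : SmaleSpace X) (T : SmaleSpace Y) (h : X ≃ₜ Y) : Prop :=
  (∀ x, h (S.phi x) = T.phi (h x)) ∨ (∀ x, h (S.phi x) = T.phi.symm (h x))

def FlipConjugate (S : SmaleSpace X) (T : SmaleSpace Y) : Prop :=
  ∃ h : X ≃ₜ Y, IsFlipConjugacy S T h

/-- An isomorphism of the principal étale groupoids `G_φ^a` and `G_ψ^a`: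
a bijection which is a homeomorphism for the inductive limit topologies and preserves
the (equivalence relation) groupoid structure. -/
structure GaIso (S : SmaleSpace X) (T : SmaleSpace Y) where
  toEquiv : ↥S.Ga ≃ ↥T.Ga
  cont : @Continuous _ _ S.gaTopology T.gaTopology toEquiv
  cont_symm : @Continuous _ _ T.gaTopology S.gaTopology toEquiv.symm
  map_mul : ∀ p q r : ↥S.Ga, (p : X × X).2 = (q : X × X).1 →
    (r : X × X) = ((p : X × X).1, (q : X × X).2) →
    (toEquiv p : Y × Y).2 = (toEquiv q : Y × Y).1 ∧
      (toEquiv r : Y × Y) = ((toEquiv p : Y × Y).1, (toEquiv q : Y × Y).2)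

end SmaleSpace

namespace SmaleSpace

variable {X Y : Type*} [MetricSpace X] [CompactSpace X] [MetricSpace Y] [CompactSpace Y]

/-- The data of an asymptotic continuous orbit equivalence between two Smale spaces
`(X,φ)` and `(Y,ψ)`: a homeomorphism `h : X → Y`, continuous functions `c₁ : X → ℤ`,
`c₂ : Y → ℤ` and continuous two-cocycle functions `d₁ : G_φ^a → ℤ`, `d₂ : G_ψ^a → ℤ`
satisfying conditions (1), (2) and (i)–(viii) of the definition of asymptotic continuous
orbit equivalence. -/
structure ACOEData (S : SmaleSpace X) (T : SmaleSpace Y) where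
  h : X ≃ₜ Y
  c₁ : X → ℤ
  c₂ : Y → ℤ
  d₁ : X → X → ℤ
  d₂ : Y → Y → ℤ
  c₁_cont : Continuous c₁
  c₂_cont : Continuous c₂
  d₁_cocycle : ∀ x z w : X, (x, z) ∈ S.Ga → (z, w) ∈ S.Ga → d₁ x z + d₁ z w = d₁ x w
  d₂_cocycle : ∀ y w v : Y, (y, w) ∈ T.Ga → (w, v) ∈ T.Ga → d₂ y w + d₂ w v = d₂ y v
  d₁_cont : @Continuous ↥S.Ga ℤ S.gaTopology _ fun p => d₁ (p : X × X).1 (p : X × X).2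
  d₂_cont : @Continuous ↥T.Ga ℤ T.gaTopology _ fun p => d₂ (p : Y × Y).1 (p : Y × Y).2
  cocycle_eq₁ : ∀ (m : ℤ) (x z : X), (x, z) ∈ S.Ga →
    cSum S.phi c₁ m x + d₁ (hIter S.phi m x) (hIter S.phi m z)
      = cSum S.phi c₁ m z + d₁ x z
  cocycle_eq₂ : ∀ (m : ℤ) (y w : Y), (y, w) ∈ T.Ga →
    cSum T.phi c₂ m y + d₂ (hIter T.phi m y) (hIter T.phi m w)
      = cSum T.phi c₂ m w + d₂ y w
  xi₁_mem : ∀ (n : ℤ) (x : X),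
    (hIter T.phi (cSum S.phi c₁ n x) (h x), h (hIter S.phi n x)) ∈ T.Ga
  xi₁_cont : ∀ n : ℤ, @Continuous X ↥T.Ga _ T.gaTopology
    fun x => ⟨(hIter T.phi (cSum S.phi c₁ n x) (h x), h (hIter S.phi n x)), xi₁_mem n x⟩
  xi₂_mem : ∀ (n : ℤ) (y : Y),
    (hIter S.phi (cSum T.phi c₂ n y) (h.symm y), h.symm (hIter T.phi n y)) ∈ S.Ga
  xi₂_cont : ∀ n : ℤ, @Continuous Y ↥S.Ga _ S.gaTopology
    fun y => ⟨(hIter S.phi (cSum T.phi c₂ n y) (h.symm y), h.symm (hIter T.phi n y)),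
      xi₂_mem n y⟩
  eta₁_mem : ∀ x z : X, (x, z) ∈ S.Ga → (hIter T.phi (d₁ x z) (h x), h z) ∈ T.Ga
  eta₁_cont : @Continuous ↥S.Ga ↥T.Ga S.gaTopology T.gaTopology
    fun p => ⟨(hIter T.phi (d₁ (p : X × X).1 (p : X × X).2) (h (p : X × X).1),
      h (p : X × X).2), eta₁_mem (p : X × X).1 (p : X × X).2 p.2⟩
  eta₂_mem : ∀ y w : Y, (y, w) ∈ T.Ga → (hIter S.phi (d₂ y w) (h.symm y), h.symm w) ∈ S.Ga
  eta₂_cont : @Continuous ↥T.Ga ↥S.Ga T.gaTopology S.gaTopology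
    fun p => ⟨(hIter S.phi (d₂ (p : Y × Y).1 (p : Y × Y).2) (h.symm (p : Y × Y).1),
      h.symm (p : Y × Y).2), eta₂_mem (p : Y × Y).1 (p : Y × Y).2 p.2⟩
  cond_v : ∀ (n : ℤ) (x : X),
    cSum T.phi c₂ (cSum S.phi c₁ n x) (h x)
      + d₂ (hIter T.phi (cSum S.phi c₁ n x) (h x)) (h (hIter S.phi n x)) = n
  cond_vi : ∀ (n : ℤ) (y : Y),
    cSum S.phi c₁ (cSum T.phi c₂ n y) (h.symm y)
      + d₁ (hIter S.phi (cSum T.phi c₂ n y) (h.symm y)) (h.symm (hIter T.phi n y)) = n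
  cond_vii : ∀ x z : X, (x, z) ∈ S.Ga →
    cSum T.phi c₂ (d₁ x z) (h x) + d₂ (hIter T.phi (d₁ x z) (h x)) (h z) = 0
  cond_viii : ∀ y w : Y, (y, w) ∈ T.Ga →
    cSum S.phi c₁ (d₂ y w) (h.symm y) + d₁ (hIter S.phi (d₂ y w) (h.symm y)) (h.symm w) = 0

/-- Asymptotic continuous orbit equivalence of Smale spaces. -/
def ACOE (S : SmaleSpace X) (T : SmaleSpace Y) : Prop := Nonempty (ACOEData S T)

/-- Asymptotic flip conjugacy: asymptotic continuous orbit equivalence in which the cocycle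
data can be chosen as `c₁ ≡ 1, c₂ ≡ 1, d₁ ≡ 0, d₂ ≡ 0` or as
`c₁ ≡ −1, c₂ ≡ −1, d₁ ≡ 0, d₂ ≡ 0`. -/
def AsymptoticallyFlipConjugate (S : SmaleSpace X) (T : SmaleSpace Y) : Prop :=
  ∃ A : ACOEData S T,
    (A.c₁ = (fun _ => 1) ∧ A.c₂ = (fun _ => 1) ∧
      A.d₁ = (fun _ _ => 0) ∧ A.d₂ = (fun _ _ => 0)) ∨
    (A.c₁ = (fun _ => -1) ∧ A.c₂ = (fun _ => -1) ∧
      A.d₁ = (fun _ _ => 0) ∧ A.d₂ = (fun _ _ => 0))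

end SmaleSpace


/-- The two-sided shift space of a 0-1 matrix `A`. -/
def MarkovShift {N : ℕ} (A : Matrix (Fin N) (Fin N) ℕ) : Type :=
  {x : ℤ → Fin N // ∀ i : ℤ, A (x i) (x (i + 1)) = 1}

/-- The underlying bi-infinite sequence of a point of the shift space. -/
def MarkovShift.seq {N : ℕ} {A : Matrix (Fin N) (Fin N) ℕ} (x : MarkovShift A) :
    ℤ → Fin N := Subtype.val x

/-!
A flip conjugacy `h` with `h ∘ σ_A = σ_B^ε ∘ h` is an asymptotic conjugacy with cocycle data
`c ≡ ε`, `d ≡ 0`: the maps `ξ` land in the diagonal, and `h`, being a sliding block code, maps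
each `G^{a,n}` into some `G^{a,m}`.

Conversely, if `c₁ ≡ c₂ ≡ ε`, compactness turns the continuity of `ξ₁` into a single window
`m` outside of which `h (σ_A x)` and `σ_B^ε (h x)` agree. The coordinates
`h (σ_A^n x)_{i - ε n}` then do not depend on `n ≥ m + ε i`, and define a continuous `K` with
`K ∘ σ_A = σ_B^ε ∘ K` that agrees with `h` on a half-line. The same construction for `h⁻¹`
gives `K'`, and `K' ∘ K`, `K ∘ K'` are the identity because an equivariant map is determined by
its values on a half-line.
-/

section Iterates

variable {X Y : Type*} [TopologicalSpace X] [TopologicalSpace Y]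

theorem hIter_eq_zpow (φ : X ≃ₜ X) (n : ℤ) : hIter φ n = ⇑(φ ^ n) := by
  let toPerm : (X ≃ₜ X) →* Equiv.Perm X := ⟨⟨Homeomorph.toEquiv, rfl⟩, fun _ _ => rfl⟩
  funext x
  exact (congrArg (· x) (map_zpow toPerm φ n)).symm

theorem cSum_const (φ : X ≃ₜ X) (c n : ℤ) (x : X) : cSum φ (fun _ => c) n x = n * c := by
  unfold cSum
  split_ifs with h
  · simp [Int.toNat_of_nonneg h]
  · simp [Int.toNat_of_nonneg (by omega : 0 ≤ -n)]

variable {φ : X ≃ₜ X} {ψ : Y ≃ₜ Y}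

theorem zpow_apply_of_semiconj {h : X → Y} (hc : ∀ x, h (φ x) = ψ (h x)) (n : ℤ) (x : X) :
    h ((φ ^ n) x) = (ψ ^ n) (h x) := by
  have hc_symm : ∀ x, h (φ.symm x) = ψ.symm (h x) := fun x => by
    rw [ψ.eq_symm_apply, ← hc, φ.apply_symm_apply]
  induction n using Int.induction_on generalizing x with
  | zero => simp
  | succ k ih => simp only [zpow_add_one, Homeomorph.mul_apply, ih, hc]
  | pred k ih => simp only [zpow_sub_one, Homeomorph.mul_apply, Homeomorph.inv_apply, ih, hc_symm]

theorem hIter_cSum_const_of_semiconj {h : X → Y} {ε : ℤ} (hh : ∀ x, h (φ x) = (ψ ^ ε) (h x))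
    (n : ℤ) (x : X) : hIter ψ (cSum φ (fun _ => ε) n x) (h x) = h (hIter φ n x) := by
  rw [cSum_const, hIter_eq_zpow, hIter_eq_zpow, zpow_apply_of_semiconj hh, mul_comm, zpow_mul]

theorem symm_apply_of_semiconj {h : X ≃ₜ Y} {ε : ℤ} (hε : ε = 1 ∨ ε = -1)
    (hh : ∀ x, h (φ x) = (ψ ^ ε) (h x)) (y : Y) : h.symm (ψ y) = (φ ^ ε) (h.symm y) := by
  have hεε : ε * ε = 1 := by rcases hε with rfl | rfl <;> rfl
  rw [h.symm_apply_eq, zpow_apply_of_semiconj hh, ← zpow_mul, hεε, zpow_one, h.apply_symm_apply]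

end Iterates

namespace SmaleSpace

variable {X Y : Type*} [MetricSpace X] [CompactSpace X] [MetricSpace Y] [CompactSpace Y]
  (S : SmaleSpace X) {T : SmaleSpace Y}

theorem mk_mem_gaN_self (n : ℤ) (x : X) : (x, x) ∈ S.GaN n := by
  simp [GaN, GsN, GuN, Gs0, Gu0, Xs, Xu, S.br_self, S.eps_pos]

theorem continuous_inclusion_gaN (n : ℕ) :
    Continuous[_, S.gaTopology] (Set.inclusion (S.gaN_subset_ga n)) :=
  continuous_iff_coinduced_le.mpr <| le_iSup (fun k : ℕ =>
    TopologicalSpace.coinduced (Set.inclusion (S.gaN_subset_ga k)) inferInstance) n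

theorem continuous_ga_dom_iff {Z : Type*} [TopologicalSpace Z] {f : S.Ga → Z} :
    Continuous[S.gaTopology, _] f ↔
      ∀ n : ℕ, Continuous (f ∘ Set.inclusion (S.gaN_subset_ga n)) :=
  continuous_iSup_dom.trans (forall_congr' fun _ => continuous_coinduced_dom)

theorem exists_mem_gaN_of_continuous
    (hopen : ∀ n : ℕ, IsOpen[S.gaTopology] {p : S.Ga | (p : X × X) ∈ S.GaN n})
    (hmono : Monotone fun n : ℕ => S.GaN n) {Z : Type*} [TopologicalSpace Z] [CompactSpace Z]
    {f : Z → S.Ga} (hf : Continuous[_, S.gaTopology] f) :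
    ∃ n : ℕ, ∀ z, (f z : X × X) ∈ S.GaN n := by
  let := S.gaTopology
  obtain ⟨n, hn⟩ := isCompact_univ.elim_directed_cover
    (fun n : ℕ => f ⁻¹' {p : S.Ga | (p : X × X) ∈ S.GaN n})
    (fun n => (hopen n).preimage hf)
    (fun z _ => Set.mem_iUnion.mpr (Set.mem_iUnion.mp (f z).2 :))
    (Monotone.directed_le fun _ _ hmn _ hz => hmono hmn hz)
  exact ⟨n, fun z => hn (Set.mem_univ z)⟩

variable {S}

theorem continuous_ga_mk {Z : Type*} [TopologicalSpace Z] {f : Z → X × X} (hf : Continuous f)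
    {n : ℕ} (hn : ∀ z, f z ∈ S.GaN n) (hfS : ∀ z, f z ∈ S.Ga) :
    Continuous[_, S.gaTopology] (fun z => (⟨f z, hfS z⟩ : S.Ga)) :=
  let := S.gaTopology
  (S.continuous_inclusion_gaN n).comp (hf.subtype_mk hn)

theorem prodMap_mem_ga {f : X → Y}
    (hf : ∀ n : ℕ, ∃ m : ℕ, Set.MapsTo (Prod.map f f) (S.GaN n) (T.GaN m)) {p : X × X}
    (hp : p ∈ S.Ga) : Prod.map f f p ∈ T.Ga := by
  obtain ⟨n, hn⟩ := Set.mem_iUnion.mp hp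
  obtain ⟨m, hm⟩ := hf n
  exact T.gaN_subset_ga m (hm hn)

theorem continuous_ga_prodMap {f : X → Y} (hfc : Continuous f)
    (hf : ∀ n : ℕ, ∃ m : ℕ, Set.MapsTo (Prod.map f f) (S.GaN n) (T.GaN m)) :
    Continuous[S.gaTopology, T.gaTopology]
      (fun p : S.Ga => (⟨Prod.map f f p, prodMap_mem_ga hf p.2⟩ : T.Ga)) := by
  let := T.gaTopology
  refine (continuous_ga_dom_iff S).mpr fun n => ?_
  obtain ⟨m, hm⟩ := hf n
  exact continuous_ga_mk (by fun_prop) (fun p => hm p.2) _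

theorem mem_gaN_zero_of_semiconj {h : X → Y} {ε : ℤ} (hh : ∀ x, h (S.phi x) = (T.phi ^ ε) (h x))
    (n : ℤ) (x : X) :
    (hIter T.phi (cSum S.phi (fun _ => ε) n x) (h x), h (hIter S.phi n x)) ∈ T.GaN (0 : ℕ) := by
  rw [hIter_cSum_const_of_semiconj hh]
  exact T.mk_mem_gaN_self _ _

theorem continuous_ga_of_semiconj {h : X → Y} (hc : Continuous h) {ε : ℤ}
    (hh : ∀ x, h (S.phi x) = (T.phi ^ ε) (h x)) (n : ℤ) :
    Continuous[_, T.gaTopology] fun x => (⟨(hIter T.phi (cSum S.phi (fun _ => ε) n x) (h x),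
      h (hIter S.phi n x)), T.gaN_subset_ga 0 (mem_gaN_zero_of_semiconj hh n x)⟩ : T.Ga) := by
  refine continuous_ga_mk ?_ (mem_gaN_zero_of_semiconj hh n) _
  simp only [hIter_cSum_const_of_semiconj hh, hIter_eq_zpow]
  fun_prop

theorem asymptoticallyFlipConjugate_of_semiconj (h : X ≃ₜ Y) {ε : ℤ} (hε : ε = 1 ∨ ε = -1)
    (hh : ∀ x, h (S.phi x) = (T.phi ^ ε) (h x))
    (hmaps : ∀ n : ℕ, ∃ m : ℕ, Set.MapsTo (Prod.map h h) (S.GaN n) (T.GaN m))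
    (hmaps_symm : ∀ n : ℕ, ∃ m : ℕ, Set.MapsTo (Prod.map h.symm h.symm) (T.GaN n) (S.GaN m)) :
    AsymptoticallyFlipConjugate S T := by
  have hεε : ε * ε = 1 := by rcases hε with rfl | rfl <;> rfl
  have hh_symm := symm_apply_of_semiconj hε hh
  refine ⟨{ h := h, c₁ := fun _ => ε, c₂ := fun _ => ε, d₁ := fun _ _ => 0, d₂ := fun _ _ => 0,
            c₁_cont := continuous_const, c₂_cont := continuous_const,
            d₁_cocycle := fun _ _ _ _ _ => rfl, d₂_cocycle := fun _ _ _ _ _ => rfl,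
            d₁_cont := @continuous_const _ _ S.gaTopology _ _,
            d₂_cont := @continuous_const _ _ T.gaTopology _ _,
            cocycle_eq₁ := fun m x z _ => by simp [cSum_const],
            cocycle_eq₂ := fun m y w _ => by simp [cSum_const],
            xi₁_mem := fun n x => T.gaN_subset_ga 0 (mem_gaN_zero_of_semiconj hh n x),
            xi₁_cont := continuous_ga_of_semiconj h.continuous hh,
            xi₂_mem := fun n y => S.gaN_subset_ga 0 (mem_gaN_zero_of_semiconj hh_symm n y),
            xi₂_cont := continuous_ga_of_semiconj h.symm.continuous hh_symm,
            eta₁_mem := fun _ _ hxz => prodMap_mem_ga hmaps hxz,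
            eta₁_cont := continuous_ga_prodMap h.continuous hmaps,
            eta₂_mem := fun _ _ hyw => prodMap_mem_ga hmaps_symm hyw,
            eta₂_cont := continuous_ga_prodMap h.symm.continuous hmaps_symm,
            cond_v := fun n x => by simp [cSum_const, mul_assoc, hεε],
            cond_vi := fun n y => by simp [cSum_const, mul_assoc, hεε],
            cond_vii := fun x z _ => by simp [cSum_const],
            cond_viii := fun y w _ => by simp [cSum_const] }, ?_⟩
  rcases hε with rfl | rfl
  · exact Or.inl ⟨rfl, rfl, rfl, rfl⟩
  · exact Or.inr ⟨rfl, rfl, rfl, rfl⟩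

end SmaleSpace

namespace MarkovShift

theorem ext_seq {N : ℕ} {A : Matrix (Fin N) (Fin N) ℕ} {x z : MarkovShift A}
    (h : ∀ i, x.seq i = z.seq i) : x = z :=
  Subtype.ext (funext h)

structure IsStandard {N : ℕ} {A : Matrix (Fin N) (Fin N) ℕ} [MetricSpace (MarkovShift A)]
    [CompactSpace (MarkovShift A)] (lam₀ : ℝ) (S : SmaleSpace (MarkovShift A)) : Prop where
  lam_lt_one : lam₀ < 1
  dist_eq : ∀ x z : MarkovShift A, x ≠ z →
    dist x z = lam₀ ^ sInf {k : ℕ | ∃ i : ℤ, i.natAbs = k ∧ x.seq i ≠ z.seq i}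
  phi_seq : ∀ (x : MarkovShift A) (i : ℤ), (S.phi x).seq i = x.seq (i + 1)
  eps_eq : S.eps = lam₀
  br_seq : ∀ x z : MarkovShift A, dist x z < lam₀ → ∀ i : ℤ,
    (S.br x z).seq i = if i ≤ 0 then x.seq i else z.seq i

namespace IsStandard

variable {N : ℕ} {A : Matrix (Fin N) (Fin N) ℕ} [MetricSpace (MarkovShift A)]
  [CompactSpace (MarkovShift A)] {lam₀ : ℝ} {S : SmaleSpace (MarkovShift A)}

theorem lam_pos (hS : IsStandard lam₀ S) : 0 < lam₀ := hS.eps_eq ▸ S.eps_pos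

theorem seq_eq_of_dist_lt (hS : IsStandard lam₀ S) {x z : MarkovShift A} {k : ℕ}
    (h : dist x z < lam₀ ^ k) {i : ℤ} (hi : i.natAbs ≤ k) : x.seq i = z.seq i := by
  by_contra hne
  rw [hS.dist_eq x z (fun e => hne (e ▸ rfl)),
    pow_lt_pow_iff_right_of_lt_one₀ hS.lam_pos hS.lam_lt_one] at h
  have := Nat.sInf_le (s := {k : ℕ | ∃ i : ℤ, i.natAbs = k ∧ x.seq i ≠ z.seq i}) ⟨i, rfl, hne⟩
  omega

theorem dist_le_of_seq_eq (hS : IsStandard lam₀ S) {x z : MarkovShift A} {k : ℕ}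
    (h : ∀ i : ℤ, i.natAbs ≤ k → x.seq i = z.seq i) : dist x z ≤ lam₀ ^ (k + 1) := by
  rcases eq_or_ne x z with rfl | hne
  · simpa using pow_nonneg hS.lam_pos.le _
  obtain ⟨i₀, hi₀⟩ : ∃ i, x.seq i ≠ z.seq i := by
    by_contra! hc
    exact hne (ext_seq hc)
  obtain ⟨i, hi_eq, hi⟩ := Nat.sInf_mem
    (s := {k : ℕ | ∃ i : ℤ, i.natAbs = k ∧ x.seq i ≠ z.seq i}) ⟨_, i₀, rfl, hi₀⟩
  rw [hS.dist_eq x z hne, ← hi_eq]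
  refine pow_le_pow_of_le_one hS.lam_pos.le hS.lam_lt_one.le ?_
  by_contra! hlt
  exact hi (h i (by omega))

theorem continuous_seq (hS : IsStandard lam₀ S) (i : ℤ) :
    Continuous fun x : MarkovShift A => x.seq i :=
  IsLocallyConstant.continuous <| IsLocallyConstant.iff_eventually_eq _ |>.mpr fun x => by
    filter_upwards [Metric.ball_mem_nhds x (pow_pos hS.lam_pos i.natAbs)] with z hz
    exact hS.seq_eq_of_dist_lt hz le_rfl

theorem continuous_iff_continuous_seq {Z : Type*} [TopologicalSpace Z] (hS : IsStandard lam₀ S)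
    {f : Z → MarkovShift A} : Continuous f ↔ ∀ i, Continuous fun z => (f z).seq i := by
  have hemb : Topology.IsClosedEmbedding (MarkovShift.seq : MarkovShift A → ℤ → Fin N) :=
    (continuous_pi hS.continuous_seq).isClosedEmbedding Subtype.val_injective
  rw [hemb.isInducing.continuous_iff, continuous_pi_iff]
  rfl

theorem isOpen_setOf_seq_eq (hS : IsStandard lam₀ S) (I : Finset ℤ) :
    IsOpen {p : MarkovShift A × MarkovShift A | ∀ i ∈ I, p.1.seq i = p.2.seq i} := by
  simp only [Set.ofPred_forall]
  exact isOpen_biInter_finset fun i _ => (isOpen_discrete {p : Fin N × Fin N | p.1 = p.2}).preimage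
    (((hS.continuous_seq i).comp continuous_fst).prodMk ((hS.continuous_seq i).comp continuous_snd))

theorem seq_zpow_apply (hS : IsStandard lam₀ S) (n : ℤ) (x : MarkovShift A) (i : ℤ) :
    ((S.phi ^ n) x).seq i = x.seq (i + n) := by
  induction n using Int.induction_on generalizing x i with
  | zero => simp
  | succ k ih => rw [zpow_add_one, Homeomorph.mul_apply, ih, hS.phi_seq, add_assoc]
  | pred k ih =>
    have := hS.phi_seq (S.phi.symm x) (i + (-k - 1))
    rw [S.phi.apply_symm_apply] at this
    rw [zpow_sub_one, Homeomorph.mul_apply, ih, Homeomorph.inv_apply, this]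
    ring_nf

theorem dist_lt_of_seq_eq (hS : IsStandard lam₀ S) {x z : MarkovShift A}
    (h : ∀ i : ℤ, i.natAbs ≤ 1 → x.seq i = z.seq i) : dist x z < lam₀ :=
  (hS.dist_le_of_seq_eq h).trans_lt (pow_lt_self_of_lt_one₀ hS.lam_pos hS.lam_lt_one (by norm_num))

theorem mem_gs0_iff (hS : IsStandard lam₀ S) {x z : MarkovShift A} :
    (x, z) ∈ S.Gs0 ↔ ∀ i : ℤ, -1 ≤ i → x.seq i = z.seq i := by
  simp only [SmaleSpace.Gs0, SmaleSpace.Xs, Set.mem_ofPred_eq, hS.eps_eq]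
  constructor
  · rintro ⟨hbr, hxz⟩ i hi
    rcases le_or_gt i 0 with h0 | h0
    · exact hS.seq_eq_of_dist_lt (k := 1) (by simpa using hxz) (by omega)
    · have := congrArg (·.seq i) hbr
      simp only [hS.br_seq z x (dist_comm x z ▸ hxz), if_neg (not_le.mpr h0)] at this
      exact this
  · intro h
    have hxz := hS.dist_lt_of_seq_eq fun i hi => h i (by omega)
    refine ⟨ext_seq fun i => ?_, hxz⟩
    rw [hS.br_seq z x (dist_comm x z ▸ hxz)]
    split_ifs with h0
    · rfl
    · exact h i (by omega)

theorem mem_gu0_iff (hS : IsStandard lam₀ S) {x z : MarkovShift A} :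
    (x, z) ∈ S.Gu0 ↔ ∀ i : ℤ, i ≤ 1 → x.seq i = z.seq i := by
  simp only [SmaleSpace.Gu0, SmaleSpace.Xu, Set.mem_ofPred_eq, hS.eps_eq]
  constructor
  · rintro ⟨hbr, hxz⟩ i hi
    rcases le_or_gt i 0 with h0 | h0
    · have := congrArg (·.seq i) hbr
      simp only [hS.br_seq x z hxz, if_pos h0] at this
      exact this
    · exact hS.seq_eq_of_dist_lt (k := 1) (by simpa using hxz) (by omega)
  · intro h
    have hxz := hS.dist_lt_of_seq_eq fun i hi => h i (by omega)
    refine ⟨ext_seq fun i => ?_, hxz⟩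
    rw [hS.br_seq x z hxz]
    split_ifs with h0
    · exact h i (by omega)
    · rfl

theorem mem_gaN_iff (hS : IsStandard lam₀ S) {n : ℤ} {x z : MarkovShift A} :
    (x, z) ∈ S.GaN n ↔ ∀ i : ℤ, n - 1 ≤ i.natAbs → x.seq i = z.seq i := by
  simp only [SmaleSpace.GaN, SmaleSpace.GsN, SmaleSpace.GuN, Set.mem_inter_iff, Set.mem_ofPred_eq,
    hIter_eq_zpow, hS.mem_gs0_iff, hS.mem_gu0_iff, hS.seq_zpow_apply]
  constructor
  · rintro ⟨hs, hu⟩ i hi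
    by_cases hin : n - 1 ≤ i
    · simpa using hs (i - n) (by omega)
    · simpa using hu (i + n) (by omega)
  · intro h
    exact ⟨fun i _ => h _ (by omega), fun i _ => h _ (by omega)⟩

theorem monotone_gaN (hS : IsStandard lam₀ S) : Monotone fun n : ℕ => S.GaN n :=
  fun _ _ hmn p hp => hS.mem_gaN_iff.mpr fun i hi => hS.mem_gaN_iff.mp hp i (by omega)

theorem isOpen_gaN (hS : IsStandard lam₀ S) (m : ℕ) :
    IsOpen[S.gaTopology] {p : S.Ga | (p : MarkovShift A × MarkovShift A) ∈ S.GaN m} := by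
  refine isOpen_iSup_iff.mpr fun n => isOpen_coinduced.mpr ?_
  let I := (Finset.Icc (-(n : ℤ)) n).filter fun i : ℤ => (m : ℤ) - 1 ≤ i.natAbs
  convert (hS.isOpen_setOf_seq_eq I).preimage continuous_subtype_val using 1
  ext ⟨⟨x, z⟩, hn⟩
  simp only [Set.mem_preimage, Set.mem_ofPred_eq, Set.inclusion, hS.mem_gaN_iff,
    Finset.mem_filter, Finset.mem_Icc, I]
  refine ⟨fun h i hi => h i hi.2, fun h i hi => ?_⟩
  by_cases hin : i.natAbs ≤ n
  · exact h i ⟨by omega, hi⟩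
  · exact hS.mem_gaN_iff.mp hn i (by omega)

theorem exists_mem_gaN_of_continuous (hS : IsStandard lam₀ S) {Z : Type*} [TopologicalSpace Z]
    [CompactSpace Z] {f : Z → S.Ga} (hf : Continuous[_, S.gaTopology] f) :
    ∃ n : ℕ, ∀ z, (f z : MarkovShift A × MarkovShift A) ∈ S.GaN n :=
  S.exists_mem_gaN_of_continuous hS.isOpen_gaN hS.monotone_gaN hf

end IsStandard

section Straighten

variable {X : Type*} [TopologicalSpace X] {M : ℕ} {B : Matrix (Fin M) (Fin M) ℕ}

def SemiconjOffWindow (F : X ≃ₜ X) (g : X → MarkovShift B) (b : ℤ) (m : ℕ) : Prop :=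
  ∀ x j, m ≤ j.natAbs → (g (F x)).seq j = (g x).seq (j + b)

-- `(g ((F ^ n) x)).seq (i - b * n)` does not depend on `n ≥ m + b * i`; take `n = m + b * i`.
def straightenSeq (F : X ≃ₜ X) (g : X → MarkovShift B) (b : ℤ) (m : ℕ) (x : X) (i : ℤ) : Fin M :=
  (g ((F ^ (m + b * i)) x)).seq (-(b * m))

variable {F : X ≃ₜ X} {g : X → MarkovShift B} {b : ℤ} {m : ℕ}

theorem straightenSeq_add (hb : b = 1 ∨ b = -1) (H : SemiconjOffWindow F g b m) (x : X) (i : ℤ) :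
    straightenSeq F g b m x (i + b) = (g ((F ^ (m + b * i)) x)).seq (-(b * m) + b) := by
  have hexp : (m : ℤ) + b * (i + b) = 1 + (m + b * i) := by rcases hb with rfl | rfl <;> ring
  rw [straightenSeq, hexp, zpow_one_add, Homeomorph.mul_apply,
    H _ _ (by rcases hb with rfl | rfl <;> simp)]

theorem straightenSeq_mem (hb : b = 1 ∨ b = -1) (H : SemiconjOffWindow F g b m) (x : X) (i : ℤ) :
    B (straightenSeq F g b m x i) (straightenSeq F g b m x (i + 1)) = 1 := by
  rcases hb with rfl | rfl
  · rw [straightenSeq_add (Or.inl rfl) H]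
    exact (g _).2 _
  · have h := straightenSeq_add (Or.inr rfl) H x (i + 1)
    have hB := (g ((F ^ ((m : ℤ) + -1 * (i + 1))) x)).2 (-(-1 * (m : ℤ)) + -1)
    rw [show i + 1 + -1 = i by ring] at h
    rw [show -(-1 * (m : ℤ)) + -1 + 1 = -(-1 * m) by ring] at hB
    rw [h]
    exact hB

def straighten (hb : b = 1 ∨ b = -1) (H : SemiconjOffWindow F g b m) (x : X) : MarkovShift B :=
  ⟨straightenSeq F g b m x, straightenSeq_mem hb H x⟩

theorem seq_zpow_natCast_apply_sub (hb : b = 1 ∨ b = -1) (H : SemiconjOffWindow F g b m)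
    (k : ℕ) (y : X) {j : ℤ} (hj : b * j ≤ -m) :
    (g ((F ^ (k : ℤ)) y)).seq (j - b * k) = (g y).seq j := by
  induction k with
  | zero => simp
  | succ k ih =>
    have hfar : m ≤ (j - b * (1 + k)).natAbs := by rcases hb with rfl | rfl <;> omega
    rw [Nat.cast_succ, add_comm (k : ℤ) 1, zpow_one_add, Homeomorph.mul_apply, H _ _ hfar, ← ih]
    ring_nf

theorem straighten_seq_of_le (hb : b = 1 ∨ b = -1) (H : SemiconjOffWindow F g b m) (x : X)
    {i : ℤ} (hi : b * i ≤ -m) : (straighten hb H x).seq i = (g x).seq i := by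
  obtain ⟨k, hk⟩ : ∃ k : ℕ, (k : ℤ) = -(m + b * i) := ⟨_, Int.toNat_of_nonneg (by omega)⟩
  have hbm : b * -(b * (m : ℤ)) ≤ -m := by rcases hb with rfl | rfl <;> simp
  have := seq_zpow_natCast_apply_sub hb H k ((F ^ ((m : ℤ) + b * i)) x) hbm
  rw [← Homeomorph.mul_apply, ← zpow_add, hk, neg_add_cancel, zpow_zero,
    Homeomorph.one_apply] at this
  change (g ((F ^ ((m : ℤ) + b * i)) x)).seq (-(b * m)) = _
  rw [← this]
  congr 1
  rcases hb with rfl | rfl <;> ring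

variable [MetricSpace (MarkovShift B)] [CompactSpace (MarkovShift B)] {lam₀ : ℝ}
  {T : SmaleSpace (MarkovShift B)}

theorem continuous_straighten (hT : IsStandard lam₀ T) (hg : Continuous g) (hb : b = 1 ∨ b = -1)
    (H : SemiconjOffWindow F g b m) : Continuous (straighten hb H) := by
  refine hT.continuous_iff_continuous_seq.mpr fun i => ?_
  change Continuous fun x => (g ((F ^ ((m : ℤ) + b * i)) x)).seq (-(b * m))
  exact (hT.continuous_seq _).comp (hg.comp (F ^ _).continuous)

theorem straighten_apply (hT : IsStandard lam₀ T) (hb : b = 1 ∨ b = -1)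
    (H : SemiconjOffWindow F g b m) (x : X) :
    straighten hb H (F x) = (T.phi ^ b) (straighten hb H x) := by
  refine ext_seq fun i => ?_
  have hexp : (m : ℤ) + b * (i + b) = m + b * i + 1 := by rcases hb with rfl | rfl <;> ring
  rw [hT.seq_zpow_apply]
  simp only [straighten, seq, straightenSeq]
  rw [hexp, zpow_add_one, Homeomorph.mul_apply]

theorem exists_semiconj_of_mem_gaN (hT : IsStandard lam₀ T) (F : X ≃ₜ X)
    {g : X → MarkovShift B} (hg : Continuous g) {b : ℤ} (hb : b = 1 ∨ b = -1) {n : ℕ}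
    (hgF : ∀ x, ((T.phi ^ b) (g x), g (F x)) ∈ T.GaN n) :
    ∃ K : X → MarkovShift B, Continuous K ∧ (∀ x, K (F x) = (T.phi ^ b) (K x)) ∧
      ∃ m : ℕ, ∀ x i, b * i ≤ -m → (K x).seq i = (g x).seq i := by
  have H : SemiconjOffWindow F g b n := fun x j hj => by
    rw [← hT.seq_zpow_apply]
    exact (hT.mem_gaN_iff.mp (hgF x) j (by omega)).symm
  exact ⟨straighten hb H, continuous_straighten hT hg hb H, straighten_apply hT hb H, n,
    fun x _ hi => straighten_seq_of_le hb H x hi⟩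

theorem eq_of_semiconj_of_seq_eq (hT : IsStandard lam₀ T) (F : X ≃ₜ X) {b : ℤ}
    (hb : b = 1 ∨ b = -1) {K K' : X → MarkovShift B} (hK : ∀ x, K (F x) = (T.phi ^ b) (K x))
    (hK' : ∀ x, K' (F x) = (T.phi ^ b) (K' x)) {m : ℕ}
    (h : ∀ x i, b * i ≤ -m → (K x).seq i = (K' x).seq i) : K = K' := by
  refine funext fun x => ext_seq fun i => ?_
  set k := -(m + b * i)
  have hx : x = (F ^ k) ((F ^ (-k)) x) := by
    rw [← Homeomorph.mul_apply, ← zpow_add, add_neg_cancel, zpow_zero, Homeomorph.one_apply]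
  rw [hx, zpow_apply_of_semiconj hK, zpow_apply_of_semiconj hK', ← zpow_mul,
    hT.seq_zpow_apply, hT.seq_zpow_apply]
  exact h _ _ (by rcases hb with rfl | rfl <;> omega)

end Straighten

section TwoShifts

variable {N M : ℕ} {A : Matrix (Fin N) (Fin N) ℕ} {B : Matrix (Fin M) (Fin M) ℕ}
  [MetricSpace (MarkovShift A)] [CompactSpace (MarkovShift A)]
  [MetricSpace (MarkovShift B)] [CompactSpace (MarkovShift B)]
  {lamA lamB : ℝ} {S : SmaleSpace (MarkovShift A)} {T : SmaleSpace (MarkovShift B)}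

theorem exists_seq_zero_eq_of_continuous (hS : IsStandard lamA S) (hT : IsStandard lamB T)
    {g : MarkovShift A → MarkovShift B} (hg : Continuous g) :
    ∃ r : ℕ, ∀ x x', (∀ j : ℤ, j.natAbs ≤ r → x.seq j = x'.seq j) →
      (g x).seq 0 = (g x').seq 0 := by
  obtain ⟨δ, hδ, hgδ⟩ := Metric.uniformContinuous_iff.mp
    (CompactSpace.uniformContinuous_of_continuous hg) 1 one_pos
  obtain ⟨r, hr⟩ := exists_pow_lt_of_lt_one hδ hS.lam_lt_one
  refine ⟨r, fun x x' h => hT.seq_eq_of_dist_lt (k := 0) ?_ le_rfl⟩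
  rw [pow_zero]
  refine hgδ (lt_of_le_of_lt ?_ hr)
  exact (hS.dist_le_of_seq_eq h).trans
    (pow_le_pow_of_le_one hS.lam_pos.le hS.lam_lt_one.le r.le_succ)

-- An equivariant continuous map is a sliding block code (Curtis–Hedlund–Lyndon).
theorem exists_window_of_semiconj (hS : IsStandard lamA S) (hT : IsStandard lamB T)
    {g : MarkovShift A → MarkovShift B} (hg : Continuous g) {a b : ℤ} (hb : b = 1 ∨ b = -1)
    (hga : ∀ x, g ((S.phi ^ a) x) = (T.phi ^ b) (g x)) :
    ∃ r : ℕ, ∀ x x' i, (∀ j : ℤ, (j - a * b * i).natAbs ≤ r → x.seq j = x'.seq j) →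
      (g x).seq i = (g x').seq i := by
  obtain ⟨r, hr⟩ := exists_seq_zero_eq_of_continuous hS hT hg
  have hbb : b * b = 1 := by rcases hb with rfl | rfl <;> rfl
  have hshift : ∀ x i, (g x).seq i = (g ((S.phi ^ (a * b * i)) x)).seq 0 := fun x i => by
    rw [mul_assoc, zpow_mul, zpow_apply_of_semiconj hga, ← zpow_mul, hT.seq_zpow_apply,
      ← mul_assoc, hbb, one_mul, zero_add]
  refine ⟨r, fun x x' i h => ?_⟩
  rw [hshift x, hshift x']
  refine hr _ _ fun j hj => ?_
  rw [hS.seq_zpow_apply, hS.seq_zpow_apply]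
  exact h _ (by simpa using hj)

theorem exists_mapsTo_gaN_of_semiconj (hS : IsStandard lamA S) (hT : IsStandard lamB T)
    {g : MarkovShift A → MarkovShift B} (hg : Continuous g) {ε : ℤ} (hε : ε = 1 ∨ ε = -1)
    (hgε : ∀ x, g (S.phi x) = (T.phi ^ ε) (g x)) (n : ℕ) :
    ∃ m : ℕ, Set.MapsTo (Prod.map g g) (S.GaN n) (T.GaN m) := by
  obtain ⟨r, hr⟩ := exists_window_of_semiconj hS hT hg hε (a := 1) (by simpa using hgε)
  refine ⟨n + r + 1, fun ⟨x, z⟩ hxz => hT.mem_gaN_iff.mpr fun i hi =>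
    hr x z i fun j hj => hS.mem_gaN_iff.mp hxz j ?_⟩
  rcases hε with rfl | rfl <;> simp only [one_mul, mul_one, mul_neg] at hj <;> omega

theorem asymptoticallyFlipConjugate_of_flipConjugate (hS : IsStandard lamA S)
    (hT : IsStandard lamB T) (hST : S.FlipConjugate T) : S.AsymptoticallyFlipConjugate T := by
  obtain ⟨h, hh⟩ := hST
  obtain ⟨ε, hε, hhε⟩ : ∃ ε : ℤ, (ε = 1 ∨ ε = -1) ∧ ∀ x, h (S.phi x) = (T.phi ^ ε) (h x) := by
    rcases hh with hh | hh
    · exact ⟨1, Or.inl rfl, by simpa using hh⟩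
    · exact ⟨-1, Or.inr rfl, by simpa using hh⟩
  exact SmaleSpace.asymptoticallyFlipConjugate_of_semiconj h hε hhε
    (exists_mapsTo_gaN_of_semiconj hS hT h.continuous hε hhε)
    (exists_mapsTo_gaN_of_semiconj hT hS h.symm.continuous hε (symm_apply_of_semiconj hε hhε))

theorem comp_eq_self_of_semiconj (hS : IsStandard lamA S) (hT : IsStandard lamB T) {a b : ℤ}
    (ha : a = 1 ∨ a = -1) (hb : b = 1 ∨ b = -1)
    {g : MarkovShift A → MarkovShift B} {g' : MarkovShift B → MarkovShift A}
    (hg : ∀ x, g' (g x) = x)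
    {K : MarkovShift A → MarkovShift B} (hK : ∀ x, K ((S.phi ^ a) x) = (T.phi ^ b) (K x))
    {m : ℕ} (hKg : ∀ x j, b * j ≤ -m → (K x).seq j = (g x).seq j)
    {K' : MarkovShift B → MarkovShift A} (hK'c : Continuous K')
    (hK' : ∀ y, K' ((T.phi ^ b) y) = (S.phi ^ a) (K' y))
    {m' : ℕ} (hK'g : ∀ y i, a * i ≤ -m' → (K' y).seq i = (g' y).seq i) (x : MarkovShift A) :
    K' (K x) = x := by
  -- `K' ∘ K` is equivariant and, `K'` being a sliding block code, agrees with `g' ∘ g = id` on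
  -- a half-line.
  obtain ⟨r, hr⟩ := exists_window_of_semiconj hT hS hK'c ha hK'
  refine congrFun (eq_of_semiconj_of_seq_eq hS (S.phi ^ a) ha (K := K' ∘ K) (K' := id)
    (fun x => by simp only [Function.comp_apply, hK, hK']) (fun _ => rfl)
    (m := m + r + m') fun x i hi => ?_) x
  rw [Function.comp_apply, hr (K x) (g x) i fun j hj => hKg x j ?_, hK'g _ i (by omega), hg,
    id_eq]
  rcases ha with rfl | rfl <;> rcases hb with rfl | rfl <;> simp only [one_mul, mul_one, neg_mul,
    mul_neg, neg_neg] at hj hi ⊢ <;> omega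

theorem flipConjugate_of_acoeData (hS : IsStandard lamA S) (hT : IsStandard lamB T)
    (D : SmaleSpace.ACOEData S T) {ε : ℤ} (hε : ε = 1 ∨ ε = -1)
    (hc₁ : D.c₁ = fun _ => ε) (hc₂ : D.c₂ = fun _ => ε) : S.FlipConjugate T := by
  have hεε : ε * ε = 1 := by rcases hε with rfl | rfl <;> rfl
  obtain ⟨m₁, hm₁⟩ := hT.exists_mem_gaN_of_continuous (D.xi₁_cont 1)
  obtain ⟨m₂, hm₂⟩ := hS.exists_mem_gaN_of_continuous (D.xi₂_cont ε)
  simp only [hc₁, hc₂, cSum_const, hIter_eq_zpow, one_mul, hεε] at hm₁ hm₂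
  obtain ⟨K₁, hK₁c, hK₁, n₁, hK₁h⟩ := exists_semiconj_of_mem_gaN hT (S.phi ^ (1 : ℤ))
    D.h.continuous hε hm₁
  obtain ⟨K₂, hK₂c, hK₂, n₂, hK₂h⟩ := exists_semiconj_of_mem_gaN hS (T.phi ^ ε)
    D.h.symm.continuous (b := 1) (Or.inl rfl) hm₂
  let K : MarkovShift A ≃ₜ MarkovShift B :=
    { toFun := K₁
      invFun := K₂
      left_inv := comp_eq_self_of_semiconj hS hT (Or.inl rfl) hε D.h.symm_apply_apply hK₁ hK₁h
        hK₂c hK₂ hK₂h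
      right_inv := comp_eq_self_of_semiconj hT hS hε (Or.inl rfl) D.h.apply_symm_apply hK₂ hK₂h
        hK₁c hK₁ hK₁h
      continuous_toFun := hK₁c
      continuous_invFun := hK₂c }
  refine ⟨K, ?_⟩
  rcases hε with rfl | rfl
  · exact Or.inl fun x => (by simpa using hK₁ x : K₁ (S.phi x) = T.phi (K₁ x))
  · exact Or.inr fun x => (by simpa using hK₁ x : K₁ (S.phi x) = T.phi.symm (K₁ x))

end TwoShifts

end MarkovShift

theorem markov_flipConjugate_iff_asymptoticallyFlipConjugate_general
    {N M : ℕ} (A : Matrix (Fin N) (Fin N) ℕ) (B : Matrix (Fin M) (Fin M) ℕ)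
    (lam₀ : ℝ) (hlam₀ : 0 < lam₀ ∧ lam₀ < 1)
    [MetricSpace (MarkovShift A)] [CompactSpace (MarkovShift A)]
    [MetricSpace (MarkovShift B)] [CompactSpace (MarkovShift B)]
    (hdA : ∀ x z : MarkovShift A, x ≠ z → dist x z
      = lam₀ ^ sInf {k : ℕ | ∃ i : ℤ, i.natAbs = k ∧ x.seq i ≠ z.seq i})
    (hdB : ∀ x z : MarkovShift B, x ≠ z → dist x z
      = lam₀ ^ sInf {k : ℕ | ∃ i : ℤ, i.natAbs = k ∧ x.seq i ≠ z.seq i})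
    (S : SmaleSpace (MarkovShift A)) (T : SmaleSpace (MarkovShift B))
    (hSphi : ∀ (x : MarkovShift A) (i : ℤ), (S.phi x).seq i = x.seq (i + 1))
    (hTphi : ∀ (x : MarkovShift B) (i : ℤ), (T.phi x).seq i = x.seq (i + 1))
    (hSeps : S.eps = lam₀)
    (hTeps : T.eps = lam₀)
    (hSbr : ∀ x z : MarkovShift A, dist x z < lam₀ → ∀ i : ℤ,
      (S.br x z).seq i = if i ≤ 0 then x.seq i else z.seq i)
    (hTbr : ∀ x z : MarkovShift B, dist x z < lam₀ → ∀ i : ℤ,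
      (T.br x z).seq i = if i ≤ 0 then x.seq i else z.seq i) :
    SmaleSpace.FlipConjugate S T ↔ SmaleSpace.AsymptoticallyFlipConjugate S T := by
  have hS : MarkovShift.IsStandard lam₀ S := ⟨hlam₀.2, hdA, hSphi, hSeps, hSbr⟩
  have hT : MarkovShift.IsStandard lam₀ T := ⟨hlam₀.2, hdB, hTphi, hTeps, hTbr⟩
  refine ⟨MarkovShift.asymptoticallyFlipConjugate_of_flipConjugate hS hT, ?_⟩
  rintro ⟨D, ⟨hc₁, hc₂, -, -⟩ | ⟨hc₁, hc₂, -, -⟩⟩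
  · exact MarkovShift.flipConjugate_of_acoeData hS hT D (Or.inl rfl) hc₁ hc₂
  · exact MarkovShift.flipConjugate_of_acoeData hS hT D (Or.inr rfl) hc₁ hc₂

/-- For irreducible non-permutation 0-1 matrices `A` and `B`, the two-sided
topological Markov shifts `(X̄_A, σ̄_A)` and `(X̄_B, σ̄_B)` (viewed as Smale spaces with
the standard metric, constants `ε = λ = λ₀`, shift homeomorphism and bracket) are flip
conjugate if and only if they are asymptotically flip conjugate. -/
theorem markov_flipConjugate_iff_asymptoticallyFlipConjugate
    {N M : ℕ} (A : Matrix (Fin N) (Fin N) ℕ) (B : Matrix (Fin M) (Fin M) ℕ)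
    (hA01 : ∀ i j, A i j = 0 ∨ A i j = 1) (hB01 : ∀ i j, B i j = 0 ∨ B i j = 1)
    (hAirr : ∀ i j, ∃ k : ℕ, 0 < k ∧ 0 < (A ^ k) i j)
    (hBirr : ∀ i j, ∃ k : ℕ, 0 < k ∧ 0 < (B ^ k) i j)
    (hAnp : ¬ ∃ σ : Equiv.Perm (Fin N), ∀ i j, A i j = 1 ↔ σ i = j)
    (hBnp : ¬ ∃ σ : Equiv.Perm (Fin M), ∀ i j, B i j = 1 ↔ σ i = j)
    (lam₀ : ℝ) (hlam₀ : 0 < lam₀ ∧ lam₀ < 1)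
    [MetricSpace (MarkovShift A)] [CompactSpace (MarkovShift A)]
    [MetricSpace (MarkovShift B)] [CompactSpace (MarkovShift B)]
    (hdA : ∀ x z : MarkovShift A, x ≠ z → dist x z
      = lam₀ ^ sInf {k : ℕ | ∃ i : ℤ, i.natAbs = k ∧ x.seq i ≠ z.seq i})
    (hdB : ∀ x z : MarkovShift B, x ≠ z → dist x z
      = lam₀ ^ sInf {k : ℕ | ∃ i : ℤ, i.natAbs = k ∧ x.seq i ≠ z.seq i})
    (S : SmaleSpace (MarkovShift A)) (T : SmaleSpace (MarkovShift B))
    (hSphi : ∀ (x : MarkovShift A) (i : ℤ), (S.phi x).seq i = x.seq (i + 1))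
    (hTphi : ∀ (x : MarkovShift B) (i : ℤ), (T.phi x).seq i = x.seq (i + 1))
    (hSeps : S.eps = lam₀) (hSlam : S.lam = lam₀)
    (hTeps : T.eps = lam₀) (hTlam : T.lam = lam₀)
    (hSbr : ∀ x z : MarkovShift A, dist x z < lam₀ → ∀ i : ℤ,
      (S.br x z).seq i = if i ≤ 0 then x.seq i else z.seq i)
    (hTbr : ∀ x z : MarkovShift B, dist x z < lam₀ → ∀ i : ℤ,
      (T.br x z).seq i = if i ≤ 0 then x.seq i else z.seq i) :
    SmaleSpace.FlipConjugate S T ↔ SmaleSpace.AsymptoticallyFlipConjugate S T :=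
  markov_flipConjugate_iff_asymptoticallyFlipConjugate_general A B lam₀ hlam₀ hdA hdB S T hSphi
    hTphi hSeps hTeps hSbr hTbr
end
end

section
/- Let (X,φ) be a Smale space with constants ε_X and λ_X, and let m,n ∈ ℤ satisfy m·n > 0 and λ_X^{|m|} + λ_X^{|n|} < 1. Then: (i) if (x,y) ∈ G_φ^{s,n} and (y,z) ∈ G_φ^{s,m}, then (x,z) ∈ G_φ^{s,0} when n,m < 0, and (x,z) ∈ G_φ^{s,n+m} when n,m > 0; (ii) if (x,y) ∈ G_φ^{u,n} and (y,z) ∈ G_φ^{u,m}, then (x,z) ∈ G_φ^{u,0} when n,m < 0, and (x,z) ∈ G_φ^{u,n+m} when n,m > 0. -/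
open Filter Set Topology

noncomputable section

/-! The contraction `d(φ y, φ z) ≤ λ d(y, z)` on local stable sets keeps a stable pair stable
under forward iteration while its distance shrinks geometrically, so after `i` resp. `j` extra
steps the pairs `(x, y)` and `(y, z)` are at distance `< λ^i ε` resp. `< λ^j ε` at a common time;
if `λ^i + λ^j ≤ 1` the triangle inequality puts `(x, z)` within the bracket's domain, and the
bracket axioms then make `(x, z)` a stable pair. Reversing time swaps the stable and unstable
structures, which gives the unstable half. -/

lemma hIter_add {X : Type*} [TopologicalSpace X] (φ : X ≃ₜ X) (a b : ℤ) (x : X) :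
    hIter φ (a + b) x = hIter φ a (hIter φ b x) := by
  simp [hIter, zpow_add, Equiv.Perm.mul_apply]

lemma hIter_natCast {X : Type*} [TopologicalSpace X] (φ : X ≃ₜ X) (k : ℕ) :
    hIter φ k = φ^[k] := by
  funext x
  simp only [hIter, zpow_natCast, Equiv.Perm.coe_pow]
  rfl

lemma hIter_symm {X : Type*} [TopologicalSpace X] (φ : X ≃ₜ X) (n : ℤ) :
    hIter φ.symm n = hIter φ (-n) := by
  funext x
  change ((φ.toEquiv.symm : Equiv.Perm X) ^ n) x = _
  rw [← Equiv.Perm.inv_def, inv_zpow']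
  rfl

namespace SmaleSpace

variable {X : Type*} [MetricSpace X] [CompactSpace X] (S : SmaleSpace X)

def reverse : SmaleSpace X where
  phi := S.phi.symm
  eps := S.eps
  lam := S.lam
  br x y := S.br y x
  eps_pos := S.eps_pos
  lam_pos := S.lam_pos
  lam_lt_one := S.lam_lt_one
  br_cont := by
    refine S.br_cont.comp continuous_swap.continuousOn fun p hp => ?_
    simpa [dist_comm] using hp
  br_self := S.br_self
  br_assoc_left x y z hxy hyz hxz :=
    S.br_assoc_right z y x (by rwa [dist_comm]) (by rwa [dist_comm]) (by rwa [dist_comm])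
  br_assoc_right x y z hyz hxy hxz :=
    S.br_assoc_left z y x (by rwa [dist_comm]) (by rwa [dist_comm]) (by rwa [dist_comm])
  phi_br x y hxy _ := by
    apply S.phi.injective
    rw [S.phi_br _ _ (by rwa [dist_comm]) (by simpa [dist_comm] using hxy)]
    simp
  contract_s := S.contract_u
  contract_u := S.contract_s

lemma gsN_reverse (n : ℤ) : S.reverse.GsN n = S.GuN n := by
  ext p
  simp only [GsN, GuN, reverse, hIter_symm]
  rfl

lemma map_mem_gs0 {a b : X} (h : (a, b) ∈ S.Gs0) :
    (S.phi a, S.phi b) ∈ S.Gs0 ∧ dist (S.phi a) (S.phi b) ≤ S.lam * dist a b := by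
  obtain ⟨hba, hab⟩ := h
  have hcontract : dist (S.phi a) (S.phi b) ≤ S.lam * dist a b := by
    simpa [dist_comm] using S.contract_s a a b (S.br_self a) (by simpa using S.eps_pos) hba hab
  have hφab : dist (S.phi a) (S.phi b) < S.eps :=
    calc dist (S.phi a) (S.phi b) ≤ S.lam * dist a b := hcontract
      _ ≤ dist a b := mul_le_of_le_one_left dist_nonneg S.lam_lt_one.le
      _ < S.eps := hab
  have hbr : S.br (S.phi b) (S.phi a) = S.phi b := by
    rw [← S.phi_br b a (by rwa [dist_comm]) (by rwa [dist_comm]), hba]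
  exact ⟨⟨hbr, hφab⟩, hcontract⟩

lemma iterate_mem_gs0 {a b : X} (h : (a, b) ∈ S.Gs0) (k : ℕ) :
    (S.phi^[k] a, S.phi^[k] b) ∈ S.Gs0 ∧
      dist (S.phi^[k] a) (S.phi^[k] b) ≤ S.lam ^ k * dist a b := by
  induction k with
  | zero => simpa using h
  | succ k ih =>
    obtain ⟨hstep, hdist⟩ := S.map_mem_gs0 ih.1
    rw [Function.iterate_succ_apply', Function.iterate_succ_apply']
    refine ⟨hstep, hdist.trans ?_⟩
    rw [pow_succ', mul_assoc]
    exact mul_le_mul_of_nonneg_left ih.2 S.lam_pos.le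

lemma mem_gsN_add {n k : ℤ} {i : ℕ} {x y : X} (hk : n + i = k) (h : (x, y) ∈ S.GsN n) :
    (x, y) ∈ S.GsN k ∧ dist (hIter S.phi k x) (hIter S.phi k y) < S.lam ^ i * S.eps := by
  have hiter : ∀ w, hIter S.phi k w = S.phi^[i] (hIter S.phi n w) := by
    intro w
    rw [← hk, add_comm, hIter_add, hIter_natCast]
  obtain ⟨hmem, hdist⟩ := S.iterate_mem_gs0 h i
  simp only [GsN, hiter]
  exact ⟨hmem, hdist.trans_lt (mul_lt_mul_of_pos_left h.2 (pow_pos S.lam_pos i))⟩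

lemma gs0_trans {a b c : X} (hab : (a, b) ∈ S.Gs0) (hbc : (b, c) ∈ S.Gs0)
    (hac : dist a c < S.eps) : (a, c) ∈ S.Gs0 := by
  obtain ⟨hba, hab⟩ := hab
  obtain ⟨hcb, hbc⟩ := hbc
  refine ⟨?_, hac⟩
  have h := S.br_assoc_right c b a (by rwa [dist_comm]) (by rwa [hba, dist_comm])
    (by rwa [dist_comm])
  rwa [hba, hcb, eq_comm] at h

lemma gsN_comp {n m k : ℤ} {i j : ℕ} {x y z : X} (hi : n + i = k) (hj : m + j = k)
    (hlam : S.lam ^ i + S.lam ^ j ≤ 1) (hxy : (x, y) ∈ S.GsN n) (hyz : (y, z) ∈ S.GsN m) :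
    (x, z) ∈ S.GsN k := by
  obtain ⟨hxy, dxy⟩ := S.mem_gsN_add hi hxy
  obtain ⟨hyz, dyz⟩ := S.mem_gsN_add hj hyz
  refine S.gs0_trans hxy hyz ?_
  calc dist (hIter S.phi k x) (hIter S.phi k z)
      ≤ dist (hIter S.phi k x) (hIter S.phi k y) + dist (hIter S.phi k y) (hIter S.phi k z) :=
        dist_triangle _ _ _
    _ < S.lam ^ i * S.eps + S.lam ^ j * S.eps := add_lt_add dxy dyz
    _ = (S.lam ^ i + S.lam ^ j) * S.eps := by ring
    _ ≤ S.eps := mul_le_of_le_one_left S.eps_pos.le hlam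

lemma gsN_comp_of_sign {m n : ℤ} (hlam : S.lam ^ m.natAbs + S.lam ^ n.natAbs ≤ 1) {x y z : X}
    (hxy : (x, y) ∈ S.GsN n) (hyz : (y, z) ∈ S.GsN m) :
    (n < 0 → m < 0 → (x, z) ∈ S.GsN 0) ∧ (0 < n → 0 < m → (x, z) ∈ S.GsN (n + m)) :=
  ⟨fun hn hm => S.gsN_comp (i := n.natAbs) (j := m.natAbs) (by omega) (by omega)
      (by rwa [add_comm]) hxy hyz,
    fun hn hm => S.gsN_comp (i := m.natAbs) (j := n.natAbs) (by omega) (by omega) hlam hxy hyz⟩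

end SmaleSpace

theorem gsN_guN_comp_general {X : Type*} [MetricSpace X] [CompactSpace X] (S : SmaleSpace X)
    (m n : ℤ)
    (hlam : S.lam ^ m.natAbs + S.lam ^ n.natAbs < 1) (x y z : X) :
    ((x, y) ∈ S.GsN n → (y, z) ∈ S.GsN m →
      ((n < 0 → m < 0 → (x, z) ∈ S.GsN 0) ∧
       (0 < n → 0 < m → (x, z) ∈ S.GsN (n + m)))) ∧
    ((x, y) ∈ S.GuN n → (y, z) ∈ S.GuN m →
      ((n < 0 → m < 0 → (x, z) ∈ S.GuN 0) ∧
       (0 < n → 0 < m → (x, z) ∈ S.GuN (n + m)))) := by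
  simp only [← S.gsN_reverse]
  exact ⟨S.gsN_comp_of_sign hlam.le, S.reverse.gsN_comp_of_sign hlam.le⟩

/-- Let `m, n ∈ ℤ` with `m·n > 0` and `λ_X^{|m|} + λ_X^{|n|} < 1`. Then
composing `G_φ^{s,n}` with `G_φ^{s,m}` lands in `G_φ^{s,0}` (if `n,m < 0`) or in
`G_φ^{s,n+m}` (if `n,m > 0`), and similarly for the unstable sets. -/
theorem gsN_guN_comp {X : Type*} [MetricSpace X] [CompactSpace X] (S : SmaleSpace X)
    (m n : ℤ) (hmn : 0 < m * n)
    (hlam : S.lam ^ m.natAbs + S.lam ^ n.natAbs < 1) (x y z : X) :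
    ((x, y) ∈ S.GsN n → (y, z) ∈ S.GsN m →
      ((n < 0 → m < 0 → (x, z) ∈ S.GsN 0) ∧
       (0 < n → 0 < m → (x, z) ∈ S.GsN (n + m)))) ∧
    ((x, y) ∈ S.GuN n → (y, z) ∈ S.GuN m →
      ((n < 0 → m < 0 → (x, z) ∈ S.GuN 0) ∧
       (0 < n → 0 < m → (x, z) ∈ S.GuN (n + m)))) :=
  gsN_guN_comp_general S m n hlam x y z
end
end
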